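/- arXiv:1905.02280 — 3 statements merged into one kernel-verified Lean document; each statement's English description precedes it below -/
import Mathlib

section
/- The function C(z,t) = (C0/2)[erfc((Rz - vt)/(2*sqrt(R*D*t))) + exp(v*z/D)*erfc((Rz + vt)/(2*sqrt(R*D*t)))] satisfies the 1-D advection–diffusion–retardation equation R*∂C/∂t = D*∂²C/∂z² - v*∂C/∂z for all z > 0, t > 0, where D > 0, R > 0. -/
/-!
Write `ξ = (R z - v t) / (2 √(R D t))`. If `f'' = -2 x f'`, as for `f = erfc`, then
`f ∘ ξ` solves `R u_t = D u_zz - v u_z`: since `ξ` is affine in `z`, after dividing by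
`f'(ξ)` the equation becomes `R ξ_t = -2 D ξ ξ_z² - v ξ_z`, which holds because
`ξ_t = -v / (2 √(R D t)) - ξ / (2 t)`. Multiplying a solution of the equation with
velocity `-v` by `exp (v z / D)` gives a solution with velocity `v`, and the
Ogata–Banks function is a linear combination of two such solutions.
-/

/-- The complementary error function `erfc x = (2/√π) ∫ₓ^∞ e^{-s²} ds`. -/
noncomputable def erfc (x : ℝ) : ℝ :=
  (2 / Real.sqrt Real.pi) * ∫ s in Set.Ioi x, Real.exp (-s ^ 2)

open MeasureTheory Set

theorem hasDerivAt_integral_Ioi {E : Type*} [NormedAddCommGroup E] [NormedSpace ℝ E]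
    [CompleteSpace E] {f : ℝ → E} (hint : Integrable f) (hcont : Continuous f) (x : ℝ) :
    HasDerivAt (fun y => ∫ s in Ioi y, f s) (-f x) x := by
  have hsplit : (fun y => ∫ s in Ioi y, f s) =
      fun y => (∫ s in Ioi 0, f s) - ∫ s in (0 : ℝ)..y, f s := by
    funext y
    exact eq_sub_of_add_eq'
      (intervalIntegral.integral_interval_add_Ioi hint.integrableOn hint.integrableOn)
  rw [hsplit]
  exact (intervalIntegral.integral_hasDerivAt_right hint.intervalIntegrable
    (hcont.stronglyMeasurableAtFilter _ _) hcont.continuousAt).const_sub _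

theorem hasDerivAt_erfc (x : ℝ) :
    HasDerivAt erfc (-(2 / Real.sqrt Real.pi) * Real.exp (-x ^ 2)) x := by
  have hint : Integrable (fun s : ℝ => Real.exp (-s ^ 2)) := by
    simpa using integrable_exp_neg_mul_sq one_pos
  rw [neg_mul, ← mul_neg]
  unfold erfc
  exact (hasDerivAt_integral_Ioi hint (by fun_prop) x).const_mul _

theorem hasDerivAt_deriv_erfc (x : ℝ) :
    HasDerivAt (fun y => -(2 / Real.sqrt Real.pi) * Real.exp (-y ^ 2))
      (-2 * x * (-(2 / Real.sqrt Real.pi) * Real.exp (-x ^ 2))) x := by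
  refine (((hasDerivAt_pow 2 x).neg.exp).const_mul _).congr_deriv ?_
  simp only [Pi.neg_apply, Nat.cast_ofNat]
  ring

/-- The `z`-derivative is asked for on the whole line so that it can be differentiated again. -/
def SolvesADREAt (R D v : ℝ) (u : ℝ → ℝ → ℝ) (z t : ℝ) : Prop :=
  ∃ (ut : ℝ) (uz : ℝ → ℝ) (uzz : ℝ), HasDerivAt (u z ·) ut t ∧
    (∀ ζ, HasDerivAt (u · t) (uz ζ) ζ) ∧ HasDerivAt uz uzz z ∧ R * ut = D * uzz - v * uz z

namespace SolvesADREAt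

variable {R D v z t : ℝ} {u w : ℝ → ℝ → ℝ}

theorem deriv_eq (h : SolvesADREAt R D v u z t) :
    R * deriv (fun τ => u z τ) t =
      D * deriv (fun ζ => deriv (fun ξ => u ξ t) ζ) z - v * deriv (fun ζ => u ζ t) z := by
  obtain ⟨ut, uz, uzz, hut, huz, huzz, heq⟩ := h
  have hderiv : (fun ζ => deriv (fun ξ => u ξ t) ζ) = uz := funext fun ζ => (huz ζ).deriv
  rw [hut.deriv, hderiv, huzz.deriv, (huz z).deriv, heq]

theorem add (hu : SolvesADREAt R D v u z t) (hw : SolvesADREAt R D v w z t) :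
    SolvesADREAt R D v (fun z t => u z t + w z t) z t := by
  obtain ⟨ut, uz, uzz, hut, huz, huzz, hu⟩ := hu
  obtain ⟨wt, wz, wzz, hwt, hwz, hwzz, hw⟩ := hw
  exact ⟨ut + wt, uz + wz, uzz + wzz, hut.add hwt, fun ζ => (huz ζ).add (hwz ζ),
    huzz.add hwzz, by simp only [Pi.add_apply]; linear_combination hu + hw⟩

theorem const_mul (c : ℝ) (hu : SolvesADREAt R D v u z t) :
    SolvesADREAt R D v (fun z t => c * u z t) z t := by
  obtain ⟨ut, uz, uzz, hut, huz, huzz, hu⟩ := hu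
  exact ⟨c * ut, fun ζ => c * uz ζ, c * uzz, hut.const_mul c, fun ζ => (huz ζ).const_mul c,
    huzz.const_mul c, by linear_combination c * hu⟩

theorem exp_mul (hD : D ≠ 0) (hu : SolvesADREAt R D (-v) u z t) :
    SolvesADREAt R D v (fun z t => Real.exp (v * z / D) * u z t) z t := by
  obtain ⟨ut, uz, uzz, hut, huz, huzz, hu⟩ := hu
  set a := v / D
  have hexp : ∀ ζ, HasDerivAt (fun ξ => Real.exp (v * ξ / D)) (Real.exp (v * ζ / D) * a) ζ :=
    fun ζ => (((hasDerivAt_id ζ).const_mul v).div_const D).exp.congr_deriv (by simp [a])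
  refine ⟨Real.exp (v * z / D) * ut, fun ζ => Real.exp (v * ζ / D) * (a * u ζ t + uz ζ),
    Real.exp (v * z / D) * a * (a * u z t + uz z) + Real.exp (v * z / D) * (a * uz z + uzz),
    hut.const_mul _, fun ζ => ((hexp ζ).mul (huz ζ)).congr_deriv (by ring),
    (hexp z).mul (((huz z).const_mul a).add huzz), ?_⟩
  have ha : D * a = v := mul_div_cancel₀ v hD
  linear_combination Real.exp (v * z / D) * hu
    - Real.exp (v * z / D) * (a * u z t + 2 * uz z) * ha

end SolvesADREAt

theorem solvesADREAt_comp_similarity {f f' : ℝ → ℝ} (hf : ∀ x, HasDerivAt f (f' x) x)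
    (hf' : ∀ x, HasDerivAt f' (-2 * x * f' x) x) {R D t : ℝ} (v z : ℝ) (hRDt : 0 < R * D * t) :
    SolvesADREAt R D v (fun z t => f ((R * z - v * t) / (2 * Real.sqrt (R * D * t)))) z t := by
  set s := Real.sqrt (R * D * t) with hs_def
  have hs : 0 < s := Real.sqrt_pos.mpr hRDt
  have hξz : ∀ ζ, HasDerivAt (fun ζ => (R * ζ - v * t) / (2 * s)) (R / (2 * s)) ζ := fun ζ =>
    ((((hasDerivAt_id ζ).const_mul R).sub_const (v * t)).div_const (2 * s)).congr_deriv
      (by simp)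
  have hs_t : HasDerivAt (fun τ => 2 * Real.sqrt (R * D * τ)) (2 * (1 / (2 * s) * (R * D))) t :=
    ((Real.hasDerivAt_sqrt hRDt.ne').comp t
      (((hasDerivAt_id t).const_mul (R * D)).congr_deriv (mul_one _))).const_mul 2
  have hξt := (((hasDerivAt_id t).const_mul v).const_sub (R * z)).div hs_t (by positivity)
  refine ⟨_, fun ζ => f' ((R * ζ - v * t) / (2 * s)) * (R / (2 * s)), _,
    (hf _).comp t hξt, fun ζ => (hf _).comp ζ (hξz ζ),
    ((hf' _).comp z (hξz z)).mul_const (R / (2 * s)), ?_⟩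
  simp only [id, mul_one, ← hs_def]
  field_simp
  ring

/-- The Ogata–Banks solution satisfies the 1-D advection–diffusion–retardation
equation `R ∂C/∂t = D ∂²C/∂z² - v ∂C/∂z` for all `z > 0`, `t > 0`. -/
theorem ogata_banks_solves_ADRE (C0 v D R : ℝ) (hD : 0 < D) (hR : 0 < R)
    (C : ℝ → ℝ → ℝ)
    (hC : ∀ z t, C z t = (C0 / 2) *
      (erfc ((R * z - v * t) / (2 * Real.sqrt (R * D * t))) +
        Real.exp (v * z / D) * erfc ((R * z + v * t) / (2 * Real.sqrt (R * D * t))))) :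
    ∀ z t : ℝ, 0 < z → 0 < t →
      R * deriv (fun τ => C z τ) t =
        D * deriv (fun ζ => deriv (fun ξ => C ξ t) ζ) z
          - v * deriv (fun ζ => C ζ t) z := by
  intro z t _ ht
  have hRDt : 0 < R * D * t := by positivity
  have front := solvesADREAt_comp_similarity hasDerivAt_erfc hasDerivAt_deriv_erfc v z hRDt
  have back := (solvesADREAt_comp_similarity hasDerivAt_erfc hasDerivAt_deriv_erfc (-v) z
    hRDt).exp_mul hD.ne'
  have hC' : C = fun z t => C0 / 2 * (erfc ((R * z - v * t) / (2 * Real.sqrt (R * D * t))) +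
      Real.exp (v * z / D) * erfc ((R * z - -v * t) / (2 * Real.sqrt (R * D * t)))) := by
    funext z t
    rw [hC, neg_mul, sub_neg_eq_add]
  rw [hC']
  exact ((front.add back).const_mul (C0 / 2)).deriv_eq
end

section
/- For the Ogata–Banks solution C(z,t) with D, R, C0 > 0 and v > 0, the initial condition holds: for every fixed z > 0, lim_{t→0⁺} C(z,t) = 0. -/
open Filter MeasureTheory Topology

/-- The Ogata–Banks analytical solution of the advection–diffusion–retardation
equation. -/
noncomputable def ogataBanks (C0 v D R z t : ℝ) : ℝ :=
  (C0 / 2) * (erfc ((R * z - v * t) / (2 * Real.sqrt (R * D * t))) +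
    Real.exp (v * z / D) * erfc ((R * z + v * t) / (2 * Real.sqrt (R * D * t))))

lemma tendsto_erfc_atTop : Tendsto erfc atTop (𝓝 0) := by
  unfold erfc
  simpa using (tendsto_integral_Ioi_zero (f := fun s : ℝ => Real.exp (-s ^ 2))
    (μ := volume) tendsto_id).const_mul (2 / Real.sqrt Real.pi)

lemma tendsto_two_mul_sqrt_mul_nhdsGT_zero {k : ℝ} (hk : 0 < k) :
    Tendsto (fun t : ℝ => 2 * Real.sqrt (k * t)) (𝓝[>] 0) (𝓝[>] 0) := by
  refine tendsto_nhdsWithin_of_tendsto_nhds_of_eventually_within _ ?_ ?_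
  · exact tendsto_nhdsWithin_of_tendsto_nhds
      ((by fun_prop : Continuous fun t : ℝ => 2 * Real.sqrt (k * t)).tendsto' 0 0 (by simp))
  · filter_upwards [self_mem_nhdsWithin] with t (ht : 0 < t)
    exact mul_pos two_pos (Real.sqrt_pos.mpr (mul_pos hk ht))

lemma tendsto_div_two_mul_sqrt_mul_atTop {f : ℝ → ℝ} {a k : ℝ} (ha : 0 < a) (hk : 0 < k)
    (hf : Tendsto f (𝓝[>] 0) (𝓝 a)) :
    Tendsto (fun t => f t / (2 * Real.sqrt (k * t))) (𝓝[>] 0) atTop := by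
  simpa only [div_eq_mul_inv, Function.comp_def] using
    hf.pos_mul_atTop ha (tendsto_inv_nhdsGT_zero.comp (tendsto_two_mul_sqrt_mul_nhdsGT_zero hk))

theorem ogata_banks_initial_condition_general (C0 v D R : ℝ)
    (hD : 0 < D) (hR : 0 < R) :
    ∀ z : ℝ, 0 < z →
      Filter.Tendsto (fun t => ogataBanks C0 v D R z t)
        (nhdsWithin 0 (Set.Ioi 0)) (nhds 0) := by
  intro z hz
  -- For fixed `z` the factor `exp (v z / D)` is a constant, so it suffices that both erfc
  -- arguments tend to `+∞`, like `R z / (2 √(R D t))`.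
  have erfc_term (w : ℝ) :
      Tendsto (fun t => erfc ((R * z + w * t) / (2 * Real.sqrt (R * D * t)))) (𝓝[>] 0) (𝓝 0) :=
    tendsto_erfc_atTop.comp <| tendsto_div_two_mul_sqrt_mul_atTop (mul_pos hR hz) (mul_pos hR hD)
      (tendsto_nhdsWithin_of_tendsto_nhds
        ((by fun_prop : Continuous fun t : ℝ => R * z + w * t).tendsto' 0 _ (by simp)))
  have hlim := ((erfc_term (-v)).add ((erfc_term v).const_mul (Real.exp (v * z / D)))).const_mul (C0 / 2)
  simpa [ogataBanks, sub_eq_add_neg] using hlim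

/-- Initial condition: for each fixed `z > 0`, `C(z,t) → 0` as `t → 0⁺`. -/
theorem ogata_banks_initial_condition (C0 v D R : ℝ)
    (hC0 : 0 < C0) (hv : 0 < v) (hD : 0 < D) (hR : 0 < R) :
    ∀ z : ℝ, 0 < z →
      Filter.Tendsto (fun t => ogataBanks C0 v D R z t)
        (nhdsWithin 0 (Set.Ioi 0)) (nhds 0) :=
  ogata_banks_initial_condition_general C0 v D R hD hR
end

section
/- For all z ≥ 0, t > 0 and parameters C0 ≥ 0, D > 0, R > 0, v ≥ 0, the Ogata–Banks solution satisfies 0 ≤ C(z,t) ≤ C0. -/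
open MeasureTheory Real Set

theorem integrable_exp_neg_sq : Integrable fun s : ℝ => exp (-s ^ 2) := by
  simpa using integrable_exp_neg_mul_sq one_pos

theorem setIntegral_Ioi_comp_add_right {E : Type*} [NormedAddCommGroup E] [NormedSpace ℝ E]
    (f : ℝ → E) (c d : ℝ) : ∫ x in Ioi c, f (x + d) = ∫ x in Ioi (c + d), f x := by
  have hemb : MeasurableEmbedding fun x : ℝ => x + d :=
    (Homeomorph.addRight d).measurableEmbedding
  have := hemb.setIntegral_map (μ := volume) f (Ioi (c + d))
  rw [map_add_right_eq_self volume d] at this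
  rw [this, preimage_add_const_Ioi, add_sub_cancel_right]

theorem erfc_nonneg (x : ℝ) : 0 ≤ erfc x :=
  mul_nonneg (by positivity) (setIntegral_nonneg measurableSet_Ioi fun s _ => (exp_pos _).le)

theorem erfc_neg_add_erfc (x : ℝ) : erfc (-x) + erfc x = 2 := by
  have hreflect : ∫ s in Ioi (-x), exp (-s ^ 2) = ∫ s in Iic x, exp (-s ^ 2) := by
    rw [← integral_comp_neg_Iic]
    simp only [even_two, Even.neg_pow]
  have hsplit : (∫ s in Iic x, exp (-s ^ 2)) + ∫ s in Ioi x, exp (-s ^ 2)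
      = ∫ s : ℝ, exp (-s ^ 2) :=
    intervalIntegral.integral_Iic_add_Ioi integrable_exp_neg_sq.integrableOn
      integrable_exp_neg_sq.integrableOn
  have hgauss : ∫ s : ℝ, exp (-s ^ 2) = √π := by simpa using integral_gaussian 1
  have hπ : √π ≠ 0 := by positivity
  rw [erfc, erfc, hreflect, ← mul_add, hsplit, hgauss]
  field_simp

theorem exp_mul_erfc_add_le_erfc_sub {a : ℝ} (ha : 0 ≤ a) (b : ℝ) :
    exp (4 * a * b) * erfc (a + b) ≤ erfc (b - a) := by
  have hshift : ∫ s in Ioi (a + b), exp (4 * a * b) * exp (-s ^ 2)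
      = ∫ u in Ioi (b - a), exp (4 * a * b) * exp (-(u + 2 * a) ^ 2) := by
    rw [setIntegral_Ioi_comp_add_right (fun s => exp (4 * a * b) * exp (-s ^ 2))]
    ring_nf
  have hpointwise :
      ∀ u ∈ Ioi (b - a), exp (4 * a * b) * exp (-(u + 2 * a) ^ 2) ≤ exp (-u ^ 2) := by
    intro u hu
    rw [← exp_add, exp_le_exp]
    nlinarith [mem_Ioi.mp hu]
  have hle : ∫ s in Ioi (a + b), exp (4 * a * b) * exp (-s ^ 2)
      ≤ ∫ u in Ioi (b - a), exp (-u ^ 2) := by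
    rw [hshift]
    refine setIntegral_mono_on ?_ integrable_exp_neg_sq.integrableOn measurableSet_Ioi hpointwise
    exact ((integrable_exp_neg_sq.comp_add_right (2 * a)).const_mul _).integrableOn
  rw [erfc, erfc, mul_left_comm, ← integral_const_mul]
  exact mul_le_mul_of_nonneg_left hle (by positivity)

theorem erfc_sub_add_exp_mul_erfc_add_nonneg (a b : ℝ) :
    0 ≤ erfc (a - b) + exp (4 * a * b) * erfc (a + b) :=
  add_nonneg (erfc_nonneg _) (mul_nonneg (exp_pos _).le (erfc_nonneg _))

theorem erfc_sub_add_exp_mul_erfc_add_le_two {a : ℝ} (ha : 0 ≤ a) (b : ℝ) :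
    erfc (a - b) + exp (4 * a * b) * erfc (a + b) ≤ 2 := by
  have hsum := erfc_neg_add_erfc (a - b)
  rw [neg_sub] at hsum
  linarith [exp_mul_erfc_add_le_erfc_sub ha b]

theorem ogataBanks_eq (C0 v z : ℝ) {D R t a b : ℝ} (hD : 0 < D) (hR : 0 < R) (ht : 0 < t)
    (ha : a = R * z / (2 * √(R * D * t))) (hb : b = v * t / (2 * √(R * D * t))) :
    ogataBanks C0 v D R z t = C0 / 2 * (erfc (a - b) + exp (4 * a * b) * erfc (a + b)) := by
  have hroot : √(R * D * t) ≠ 0 := by positivity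
  have hexponent : v * z / D = 4 * a * b := by
    rw [ha, hb]
    field_simp
    rw [sq_sqrt (by positivity)]
    ring
  rw [ogataBanks, hexponent, ha, hb, sub_div, add_div]

theorem ogata_banks_bounds_general (C0 v D R : ℝ)
    (hC0 : 0 ≤ C0) (hD : 0 < D) (hR : 0 < R) :
    ∀ z t : ℝ, 0 ≤ z → 0 < t →
      0 ≤ ogataBanks C0 v D R z t ∧ ogataBanks C0 v D R z t ≤ C0 := by
  intro z t hz ht
  rw [ogataBanks_eq C0 v z hD hR ht rfl rfl]
  have ha : 0 ≤ R * z / (2 * √(R * D * t)) := by positivity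
  have hupper := erfc_sub_add_exp_mul_erfc_add_le_two ha (v * t / (2 * √(R * D * t)))
  constructor
  · exact mul_nonneg (by positivity) (erfc_sub_add_exp_mul_erfc_add_nonneg _ _)
  · calc _ ≤ C0 / 2 * 2 := mul_le_mul_of_nonneg_left hupper (by positivity)
      _ = C0 := by ring

/-- For `z ≥ 0`, `t > 0`, `C0 ≥ 0`, `D > 0`, `R > 0`, `v ≥ 0`, the Ogata–Banks
solution satisfies `0 ≤ C(z,t) ≤ C0`. -/
theorem ogata_banks_bounds (C0 v D R : ℝ)
    (hC0 : 0 ≤ C0) (hv : 0 ≤ v) (hD : 0 < D) (hR : 0 < R) :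
    ∀ z t : ℝ, 0 ≤ z → 0 < t →
      0 ≤ ogataBanks C0 v D R z t ∧ ogataBanks C0 v D R z t ≤ C0 :=
  ogata_banks_bounds_general C0 v D R hC0 hD hR
end
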